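/- arXiv:1409.7794 — 3 statements merged into one kernel-verified Lean document; each statement's English description precedes it below -/
import Mathlib

section
/- If μ* minimizes f over {μ : Fin d → ℝ : ‖μ‖₀ ≤ B}, then for every index j one has μ*_j = μ̂_j or μ*_j = 0. That is, every optimal solution of the SOFS truncation problem agrees with μ̂ on its support and is zero elsewhere. -/
/-!
If `μ*_j ∉ {0, μ̂_j}`, resetting coordinate `j` of `μ*` to `μ̂_j` keeps the support inside that of
`μ*`, so the new point is feasible, while it removes the positive term `D_j (μ*_j - μ̂_j)²` from
the objective: this contradicts optimality.
-/

open Finset Function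

variable {ι : Type*} [Fintype ι] [DecidableEq ι]

theorem card_filter_update_ne_zero_le {M : Type*} [Zero M] [DecidableEq M] (f : ι → M) {j : ι}
    (hj : f j ≠ 0) (a : M) : #{i | update f j a i ≠ 0} ≤ #{i | f i ≠ 0} := by
  refine card_le_card fun i hi => ?_
  rcases eq_or_ne i j with rfl | hij
  · simpa using hj
  · simpa [update_of_ne hij] using hi

theorem sum_apply_update_add {β : ι → Type*} {M : Type*} [AddCommMonoid M] (F : ∀ i, β i → M)
    (x : ∀ i, β i) (j : ι) (a : β j) :
    ∑ i, F i (update x j a i) + F j (x j) = ∑ i, F i (x i) + F j a := by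
  simp_rw [apply_update F, sum_update_of_mem (mem_univ j),
    sum_eq_add_sum_sdiff_singleton_of_mem (mem_univ j) fun i => F i (x i)]
  abel

theorem sum_mul_sq_sub_update_lt {w x c : ι → ℝ} {j : ι} (hw : 0 < w j) (hx : x j ≠ c j) :
    ∑ i, w i * (update x j (c j) i - c i) ^ 2 < ∑ i, w i * (x i - c i) ^ 2 := by
  have hsum := sum_apply_update_add (fun i t => w i * (t - c i) ^ 2) x j (c j)
  have hpos : 0 < w j * (x j - c j) ^ 2 := by
    have := sub_ne_zero.mpr hx
    positivity
  rw [sub_self, zero_pow two_ne_zero, mul_zero, add_zero] at hsum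
  linarith

theorem sofs_truncation_minimizer_agrees_or_zero_general
    (d B : ℕ) (D μhat : Fin d → ℝ) (hD : ∀ j, D j > 0)
    (μstar : Fin d → ℝ)
    (hcard : (Finset.univ.filter fun j => μstar j ≠ 0).card ≤ B)
    (hmin : ∀ μ : Fin d → ℝ, (Finset.univ.filter fun j => μ j ≠ 0).card ≤ B →
      (1 / 2) * ∑ j, D j * (μstar j - μhat j) ^ 2 ≤
        (1 / 2) * ∑ j, D j * (μ j - μhat j) ^ 2) :
    ∀ j, μstar j = μhat j ∨ μstar j = 0 := by
  intro j
  by_contra! hj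
  obtain ⟨hne, hzero⟩ := hj
  have hle := hmin _ ((card_filter_update_ne_zero_le μstar hzero (μhat j)).trans hcard)
  have hlt := sum_mul_sq_sub_update_lt (hD j) hne
  linarith

/-- Every optimal solution `μ*` of the SOFS truncation problem
`min (1/2) ∑ j, D j * (μ j - μ̂ j)^2  s.t.  ‖μ‖₀ ≤ B`
agrees with `μ̂` on its support and is zero elsewhere. -/
theorem sofs_truncation_minimizer_agrees_or_zero
    (d B : ℕ) (hB : B ≤ d) (D μhat : Fin d → ℝ) (hD : ∀ j, D j > 0)
    (μstar : Fin d → ℝ)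
    (hcard : (Finset.univ.filter fun j => μstar j ≠ 0).card ≤ B)
    (hmin : ∀ μ : Fin d → ℝ, (Finset.univ.filter fun j => μ j ≠ 0).card ≤ B →
      (1 / 2) * ∑ j, D j * (μstar j - μhat j) ^ 2 ≤
        (1 / 2) * ∑ j, D j * (μ j - μhat j) ^ 2) :
    ∀ j, μstar j = μhat j ∨ μstar j = 0 :=
  sofs_truncation_minimizer_agrees_or_zero_general d B D μhat hD μstar hcard hmin
end

section
/- Let d ∈ ℕ, γ > 0, y ∈ {−1, +1}, x, μ_t : Fin d → ℝ, and σ_t : Fin d → ℝ with σ_{t,j} > 0 for all j (the diagonal of Σ_t). Define F(μ) = (1/2) Σ_j (μ_j − μ_{t,j})²/σ_{t,j} + (1/(2γ)) (max(0, 1 − y Σ_j μ_j x_j))². Set ℓ = max(0, 1 − y Σ_j μ_{t,j} x_j) and β = 1/(Σ_j x_j² σ_{t,j} + γ). Then the vector μ* with μ*_j = μ_{t,j} + β ℓ y σ_{t,j} x_j is the unique global minimizer of F over ℝ^d. (Correctness of the AROW mean update μ_{t+1} = μ_t − (1/2) β_t Σ_t g_t with g_t = −2 max(0, 1 − y_t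 x_tᵀμ_t) y_t x_t and β_t = 1/(x_tᵀΣ_t x_t + γ).) -/
/-!
`F` is a strictly convex quadratic plus the convex function `(1/(2γ)) · (max 0 (1 − y⟪μ, x⟫))²`,
so it suffices to check the first-order condition at `μ*`. With `S = ∑ x_j² σ_j`,
`ℓ = max 0 (1 − y⟪μ_t, x⟫)` and `β = 1/(S + γ)`, the hinge at `μ*` equals `βγℓ` (because `y² = 1`),
so the gradient `βℓy x` of the quadratic part is cancelled by the hinge's slope `−(1/γ)·βγℓ·y x`.
The tangent-line inequality for `s ↦ (max 0 s)²` then leaves `F μ − F μ* ≥ (1/2) ∑ (μ_j − μ*_j)²/σ_j`.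
-/

open Finset

lemma sq_max_zero_add_two_mul_le (a b : ℝ) :
    max 0 a ^ 2 + 2 * max 0 a * (b - a) ≤ max 0 b ^ 2 := by
  rcases le_or_gt a 0 with ha | ha
  · simp [max_eq_left ha]
  · rw [max_eq_right ha.le]
    rcases le_or_gt b 0 with hb | hb
    · rw [max_eq_left hb]; nlinarith
    · rw [max_eq_right hb.le]; nlinarith [sq_nonneg (a - b)]

lemma max_zero_sub_mul_max_zero {m S γ : ℝ} (hγ : 0 ≤ γ) (hSγ : 0 < S + γ) :
    max 0 (m - 1 / (S + γ) * max 0 m * S) = γ * (1 / (S + γ) * max 0 m) := by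
  rcases le_or_gt m 0 with hm | hm
  · simp [hm]
  · have hval : m - 1 / (S + γ) * m * S = γ * (1 / (S + γ) * m) := by
      field_simp; ring
    rw [max_eq_right hm.le, hval, max_eq_right (by positivity)]

section WeightedSquares

variable {ι : Type*} [Fintype ι]

lemma sum_sq_sub_div_eq (μ ν c σ : ι → ℝ) :
    ∑ j, (μ j - c j) ^ 2 / σ j = ∑ j, (ν j - c j) ^ 2 / σ j + ∑ j, (μ j - ν j) ^ 2 / σ j
      + 2 * ∑ j, (ν j - c j) * (μ j - ν j) / σ j := by
  rw [mul_sum, ← sum_add_distrib, ← sum_add_distrib]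
  exact sum_congr rfl fun j _ => by ring

lemma sum_sq_sub_div_pos {μ ν σ : ι → ℝ} (hσ : ∀ j, 0 < σ j) (h : μ ≠ ν) :
    0 < ∑ j, (μ j - ν j) ^ 2 / σ j := by
  obtain ⟨j, hj⟩ := Function.ne_iff.mp h
  refine sum_pos' (fun i _ => div_nonneg (sq_nonneg _) (hσ i).le) ⟨j, mem_univ j, ?_⟩
  have : μ j - ν j ≠ 0 := sub_ne_zero.mpr hj
  exact div_pos (by positivity) (hσ j)

end WeightedSquares

section Arow

variable {ι : Type*} [Fintype ι] (γ y : ℝ) (x c σ : ι → ℝ)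

noncomputable def arowObjective (μ : ι → ℝ) : ℝ :=
  (1 / 2) * (∑ j, (μ j - c j) ^ 2 / σ j) + (1 / (2 * γ)) * (max 0 (1 - y * ∑ j, μ j * x j)) ^ 2

noncomputable def arowUpdate : ι → ℝ := fun j =>
  c j + (1 / (∑ i, (x i) ^ 2 * σ i + γ)) * (max 0 (1 - y * ∑ i, c i * x i)) * y * σ j * x j

variable {γ y x c σ}

lemma max_zero_margin_arowUpdate (hγ : 0 < γ) (hy : y * y = 1) (hσ : ∀ j, 0 ≤ σ j) :
    max 0 (1 - y * ∑ j, arowUpdate γ y x c σ j * x j)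
      = γ * (1 / (∑ i, x i ^ 2 * σ i + γ) * max 0 (1 - y * ∑ i, c i * x i)) := by
  set S := ∑ i, x i ^ 2 * σ i
  have hS : 0 ≤ S := sum_nonneg fun i _ => mul_nonneg (sq_nonneg _) (hσ i)
  set k := 1 / (S + γ) * max 0 (1 - y * ∑ i, c i * x i)
  have hsum : ∑ j, arowUpdate γ y x c σ j * x j = ∑ j, c j * x j + k * y * S := by
    simp only [S, mul_sum, ← sum_add_distrib]
    exact sum_congr rfl fun j _ => by simp only [arowUpdate, k, S]; ring
  have hmargin : 1 - y * ∑ j, arowUpdate γ y x c σ j * x j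
      = (1 - y * ∑ i, c i * x i) - k * S := by
    rw [hsum]; linear_combination (-(k * S)) * hy
  rw [hmargin, max_zero_sub_mul_max_zero hγ.le (by linarith)]

lemma sum_arowUpdate_sub_mul_div (hσ : ∀ j, σ j ≠ 0) (μ : ι → ℝ) :
    ∑ j, (arowUpdate γ y x c σ j - c j) * (μ j - arowUpdate γ y x c σ j) / σ j
      = (1 / (∑ i, x i ^ 2 * σ i + γ) * max 0 (1 - y * ∑ i, c i * x i)) * y
        * ∑ j, (μ j - arowUpdate γ y x c σ j) * x j := by
  rw [mul_sum]
  refine sum_congr rfl fun j _ => ?_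
  simp only [arowUpdate, add_sub_cancel_left]
  field_simp [hσ j]

theorem arowObjective_arowUpdate_lt (hγ : 0 < γ) (hy : y * y = 1) (hσ : ∀ j, 0 < σ j)
    {μ : ι → ℝ} (hμ : μ ≠ arowUpdate γ y x c σ) :
    arowObjective γ y x c σ (arowUpdate γ y x c σ) < arowObjective γ y x c σ μ := by
  set ν := arowUpdate γ y x c σ
  set b := 1 / (∑ i, x i ^ 2 * σ i + γ) * max 0 (1 - y * ∑ i, c i * x i)
  set T := ∑ j, (μ j - ν j) * x j
  have hhinge : max 0 (1 - y * ∑ j, ν j * x j) = γ * b :=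
    max_zero_margin_arowUpdate hγ hy fun j => (hσ j).le
  have htangent := sq_max_zero_add_two_mul_le (1 - y * ∑ j, ν j * x j) (1 - y * ∑ j, μ j * x j)
  have hshift : (1 - y * ∑ j, μ j * x j) - (1 - y * ∑ j, ν j * x j) = -(y * T) := by
    simp only [T, sub_mul, sum_sub_distrib]; ring
  rw [hshift, hhinge] at htangent
  have hquad := sum_sq_sub_div_eq μ ν c σ
  rw [sum_arowUpdate_sub_mul_div (fun j => (hσ j).ne')] at hquad
  have hpos := sum_sq_sub_div_pos hσ hμ
  have hhinge_lower : (1 / (2 * γ)) * (γ * b) ^ 2 - b * y * T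
      ≤ (1 / (2 * γ)) * max 0 (1 - y * ∑ j, μ j * x j) ^ 2 :=
    calc (1 / (2 * γ)) * (γ * b) ^ 2 - b * y * T
        = (1 / (2 * γ)) * ((γ * b) ^ 2 + 2 * (γ * b) * -(y * T)) := by field_simp; ring
      _ ≤ _ := by gcongr
  unfold arowObjective
  rw [hhinge, hquad]
  linarith

end Arow

/-- Correctness of the AROW mean update: with diagonal covariance
`σ_t`, squared hinge loss and `γ > 0`, the vector
`μ*_j = μ_{t,j} + β ℓ y σ_{t,j} x_j`, where
`ℓ = max 0 (1 − y ∑ μ_{t,j} x_j)` and `β = 1/(∑ x_j² σ_{t,j} + γ)`, is the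
unique global minimizer of
`F μ = (1/2) ∑ (μ_j − μ_{t,j})²/σ_{t,j} + (1/(2γ)) (max 0 (1 − y ∑ μ_j x_j))²`. -/
theorem arow_mean_update_optimal
    (d : ℕ) (γ : ℝ) (hγ : γ > 0) (y : ℝ) (hy : y = 1 ∨ y = -1)
    (x μt σt : Fin d → ℝ) (hσt : ∀ j, σt j > 0) :
    ∀ μ : Fin d → ℝ,
      μ ≠ (fun j => μt j +
          (1 / (∑ i, (x i) ^ 2 * σt i + γ)) *
            (max 0 (1 - y * ∑ i, μt i * x i)) * y * σt j * x j) →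
      (1 / 2) * (∑ j, (((fun j => μt j +
            (1 / (∑ i, (x i) ^ 2 * σt i + γ)) *
              (max 0 (1 - y * ∑ i, μt i * x i)) * y * σt j * x j) j) - μt j) ^ 2
            / σt j) +
        (1 / (2 * γ)) * (max 0 (1 - y * ∑ j, ((fun j => μt j +
            (1 / (∑ i, (x i) ^ 2 * σt i + γ)) *
              (max 0 (1 - y * ∑ i, μt i * x i)) * y * σt j * x j) j) * x j)) ^ 2 <
      (1 / 2) * (∑ j, (μ j - μt j) ^ 2 / σt j) +
        (1 / (2 * γ)) * (max 0 (1 - y * ∑ j, μ j * x j)) ^ 2 := by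
  intro μ hμ
  have hy2 : y * y = 1 := by rcases hy with rfl | rfl <;> norm_num
  exact arowObjective_arowUpdate_lt (x := x) (c := μt) hγ hy2 hσt hμ
end

section
/- Let γ > 0, d ∈ ℕ, B ≤ d, and let x_t : Fin d → ℝ for t ≥ 1. Define Σ : ℕ → Fin d → ℝ by Σ_{1,j} = 1 and Σ_{t+1,j} = (Σ_{t,j}⁻¹ + x_{t,j}²/γ)⁻¹ for all t and j. Then for every t, the B-th smallest value of the multiset {Σ_{t+1,1}, …, Σ_{t+1,d}} is less than or equal to the B-th smallest value of {Σ_{t,1}, …, Σ_{t,d}}. (The heap limit of the MaxHeap in Algorithm SOFS decreases monotonically, which justifies that elements never removed from consideration need not be re-checked.) -/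
/-!
Each coordinate of the covariance can only shrink: for `s > 0` and `c ≥ 0`,
`(s⁻¹ + c)⁻¹ ≤ s`, and positivity of `Σ_t` is preserved by the recursion. Taking the
`k`-th smallest entry is monotone under pointwise comparison of tuples, since
`k < #{i | f i ≤ a}` characterises `(f ∘ sort f) k ≤ a`.
-/

open Finset

namespace Tuple

variable {n : ℕ} {α : Type*} [LinearOrder α]

theorem card_filter_comp_sort_le (f : Fin n → α) (a : α) :
    #{i | (f ∘ sort f) i ≤ a} = #{i | f i ≤ a} :=
  card_equiv (sort f) (by simp)

theorem monotone_comp_sort : Monotone fun f : Fin n → α ↦ f ∘ sort f := by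
  intro f g hfg k
  rw [← lt_card_le_iff_apply_le_of_monotone (monotone_sort f), card_filter_comp_sort_le]
  calc (k : ℕ) < #{i | (g ∘ sort g) i ≤ (g ∘ sort g) k} :=
        (lt_card_le_iff_apply_le_of_monotone (monotone_sort g)).2 le_rfl
    _ = #{i | g i ≤ (g ∘ sort g) k} := card_filter_comp_sort_le g _
    _ ≤ #{i | f i ≤ (g ∘ sort g) k} := card_le_card fun i ↦ by simpa using (hfg i).trans

end Tuple

section InvAddInv

variable {K : Type*} [Field K] [LinearOrder K] [IsStrictOrderedRing K] {s c : K}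

theorem inv_inv_add_pos (hs : 0 < s) (hc : 0 ≤ c) : 0 < (s⁻¹ + c)⁻¹ := by
  have := inv_pos.2 hs
  positivity

theorem inv_inv_add_le (hs : 0 < s) (hc : 0 ≤ c) : (s⁻¹ + c)⁻¹ ≤ s :=
  calc (s⁻¹ + c)⁻¹ ≤ s⁻¹⁻¹ := inv_anti₀ (inv_pos.2 hs) (le_add_of_nonneg_right hc)
    _ = s := inv_inv s

end InvAddInv

/-- The heap limit of the MaxHeap in Algorithm SOFS decreases monotonically:
with the AROW/SOFS diagonal covariance recursion `S 1 j = 1`,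
`S (t+1) j = ((S t j)⁻¹ + (x t j)² / γ)⁻¹` (for `γ > 0`), the `B`-th smallest
value of `{S (t+1) 1, …, S (t+1) d}` is at most the `B`-th smallest value of
`{S t 1, …, S t d}` for every `t ≥ 1` (here `S t ∘ Tuple.sort (S t)` is the
tuple `S t` rearranged in nondecreasing order). -/
theorem sofs_heap_limit_monotone_decreasing
    (γ : ℝ) (hγ : γ > 0) (d B : ℕ) (hB1 : 1 ≤ B) (hBd : B ≤ d)
    (x : ℕ → Fin d → ℝ) (S : ℕ → Fin d → ℝ)
    (hinit : ∀ j, S 1 j = 1)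
    (hrec : ∀ t ≥ 1, ∀ j, S (t + 1) j = ((S t j)⁻¹ + (x t j) ^ 2 / γ)⁻¹) :
    ∀ t ≥ 1,
      (S (t + 1) ∘ Tuple.sort (S (t + 1))) ⟨B - 1, by omega⟩ ≤
        (S t ∘ Tuple.sort (S t)) ⟨B - 1, by omega⟩ := by
  have hc : ∀ t j, 0 ≤ x t j ^ 2 / γ := fun t j ↦ div_nonneg (sq_nonneg _) hγ.le
  have hpos : ∀ t ≥ 1, ∀ j, 0 < S t j := by
    intro t ht
    induction t, ht using Nat.le_induction with
    | base => simp [hinit]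
    | succ t ht ih => exact fun j ↦ hrec t ht j ▸ inv_inv_add_pos (ih j) (hc t j)
  intro t ht
  have hstep : S (t + 1) ≤ S t := fun j ↦ hrec t ht j ▸ inv_inv_add_le (hpos t ht j) (hc t j)
  exact Tuple.monotone_comp_sort hstep _
end
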